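/- Markov property of the predictor process: fix a controlled-predictor policy and initial pmf π_0, and let t ≥ 0. For any two output histories h, h' ∈ ℳ^t of positive probability under the trajectory law which yield the same predictor π_t (and hence the same Q_t = γ^e(π_t), η_t = γ^c(π_t)), the conditional distribution of π_{t+1} given the history is the same; explicitly, for every ρ ∈ P(𝕏), P(π_{t+1} = ρ | q_{[0,t-1]} = h) = Σ_{q ∈ ℳ : π_t(Q_t⁻¹(q)) > 0 and F(π_t,Q_t,η_t,q) = ρ} π_t(Q_t⁻¹(q)), which depends only on (π_t, Q_t, η_t). -/

import Mathlib

/-!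
By induction on `n`, the joint weight of the outputs `q_{[0,n-1]}` and the state `x_n` factors
as `P(q_{[0,n-1]}) · π_n(x_n)`: the predictor is the conditional law of the current state given
the past outputs. Summing over the cell `Q_n⁻¹(q)` gives
`P(q_{[0,n]}) = P(q_{[0,n-1]}) · π_n(Q_n⁻¹(q))`, so the conditional law of the next output, and
hence of `π_{n+1} = F(π_n, Q_n, η_n, q_n)`, depends on the history only through `π_n`.
-/

open Finset

noncomputable section

variable {X U M : Type}

/-- `π` is a probability mass function on the finite set `X`. -/
def IsPmf [Fintype X] (π : X → ℝ) : Prop :=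
  (∀ x, 0 ≤ π x) ∧ ∑ x, π x = 1

/-- Mass that `π` assigns to the cell `Q⁻¹(q)`. -/
def mass [Fintype X] [DecidableEq M] (π : X → ℝ) (Q : X → M) (q : M) : ℝ :=
  ∑ x ∈ Finset.univ.filter (fun x => Q x = q), π x

/-- One-step predictor (Bayesian) update `F(π,Q,η,q)`. -/
def Fupd [Fintype X] [DecidableEq M] (P : X → U → X → ℝ)
    (π : X → ℝ) (Q : X → M) (η : (X → M) → M → U) (q : M) : X → ℝ :=
  fun x' => (mass π Q q)⁻¹ *
    ∑ x ∈ Finset.univ.filter (fun x => Q x = q), P x (η Q q) x' * π x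

/-- Predictor process along a (chronological) list of channel outputs,
under the controlled-predictor policy `(γe, γc)`. -/
def predSeq [Fintype X] [DecidableEq M] (P : X → U → X → ℝ)
    (γe : (X → ℝ) → (X → M)) (γc : (X → ℝ) → ((X → M) → M → U)) :
    (X → ℝ) → List M → (X → ℝ)
  | π, [] => π
  | π, q :: qs => predSeq P γe γc (Fupd P π (γe π) (γc π) q) qs

/-- The predictor `π_s` given output history `qs` (only the first `s` outputs are used). -/
def predAt [Fintype X] [DecidableEq M] (P : X → U → X → ℝ)
    (γe : (X → ℝ) → (X → M)) (γc : (X → ℝ) → ((X → M) → M → U))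
    (π0 : X → ℝ) {n : ℕ} (qs : Fin n → M) (s : ℕ) : X → ℝ :=
  predSeq P γe γc π0 ((List.ofFn qs).take s)

/-- Trajectory law of `(x_{[0,n-1]}, q_{[0,n-1]})` under the controlled-predictor
policy `(γe, γc)` with initial pmf `π0`:
`π0(x_0) ∏_s 1{q_s = Q_s(x_s)} ∏_s P(x_{s+1} | x_s, η_s(Q_s, q_s))`. -/
def law [Fintype X] [Fintype M] [DecidableEq M] (P : X → U → X → ℝ)
    (γe : (X → ℝ) → (X → M)) (γc : (X → ℝ) → ((X → M) → M → U))
    (π0 : X → ℝ) (n : ℕ) (xs : Fin n → X) (qs : Fin n → M) : ℝ :=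
  ∏ s : Fin n,
    ((if (s : ℕ) = 0 then π0 (xs s)
      else
        P (xs ⟨(s : ℕ) - 1, lt_of_le_of_lt (Nat.sub_le _ _) s.isLt⟩)
          (γc (predAt P γe γc π0 qs ((s : ℕ) - 1))
            (γe (predAt P γe γc π0 qs ((s : ℕ) - 1)))
            (qs ⟨(s : ℕ) - 1, lt_of_le_of_lt (Nat.sub_le _ _) s.isLt⟩))
          (xs s))
      * (if qs s = γe (predAt P γe γc π0 qs (s : ℕ)) (xs s) then 1 else 0))

/-- Probability of the output history `qs` under the trajectory law. -/
def outProb [Fintype X] [Fintype M] [DecidableEq M] (P : X → U → X → ℝ)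
    (γe : (X → ℝ) → (X → M)) (γc : (X → ℝ) → ((X → M) → M → U))
    (π0 : X → ℝ) (n : ℕ) (qs : Fin n → M) : ℝ :=
  ∑ xs : Fin n → X, law P γe γc π0 n xs qs

open scoped Classical

section BayesUpdate

variable [Fintype X] [DecidableEq M]

theorem mass_nonneg {π : X → ℝ} (hπ : ∀ x, 0 ≤ π x) (Q : X → M) (q : M) :
    0 ≤ mass π Q q :=
  Finset.sum_nonneg fun x _ => hπ x

/-- On a null cell `Fupd` is junk (`0⁻¹ = 0`), but both sides vanish there. -/
theorem mass_mul_Fupd (P : X → U → X → ℝ) {π : X → ℝ} (hπ : ∀ x, 0 ≤ π x) (Q : X → M)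
    (η : (X → M) → M → U) (q : M) (x' : X) :
    mass π Q q * Fupd P π Q η q x' =
      ∑ x ∈ Finset.univ.filter (fun x => Q x = q), P x (η Q q) x' * π x := by
  by_cases hm : mass π Q q = 0
  · have hcell : ∀ x ∈ Finset.univ.filter (fun x => Q x = q), π x = 0 :=
      (Finset.sum_eq_zero_iff_of_nonneg fun x _ => hπ x).mp hm
    rw [hm, zero_mul, Finset.sum_eq_zero fun x hx => by rw [hcell x hx, mul_zero]]
  · rw [Fupd, ← mul_assoc, mul_inv_cancel₀ hm, one_mul]

theorem Fupd_nonneg {P : X → U → X → ℝ} (hP : ∀ x u x', 0 ≤ P x u x') {π : X → ℝ}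
    (hπ : ∀ x, 0 ≤ π x) (Q : X → M) (η : (X → M) → M → U) (q : M) (x' : X) :
    0 ≤ Fupd P π Q η q x' :=
  mul_nonneg (inv_nonneg.mpr (mass_nonneg hπ Q q))
    (Finset.sum_nonneg fun x _ => mul_nonneg (hP _ _ _) (hπ x))

theorem predSeq_nonneg {P : X → U → X → ℝ} (hP : ∀ x u x', 0 ≤ P x u x')
    (γe : (X → ℝ) → (X → M)) (γc : (X → ℝ) → ((X → M) → M → U)) {π : X → ℝ}
    (hπ : ∀ x, 0 ≤ π x) (l : List M) : ∀ x, 0 ≤ predSeq P γe γc π l x := by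
  induction l generalizing π with
  | nil => exact hπ
  | cons a l ih => exact ih (Fupd_nonneg hP hπ _ _ a)

theorem predAt_nonneg {P : X → U → X → ℝ} (hP : ∀ x u x', 0 ≤ P x u x')
    (γe : (X → ℝ) → (X → M)) (γc : (X → ℝ) → ((X → M) → M → U)) {π0 : X → ℝ}
    (hπ0 : ∀ x, 0 ≤ π0 x) {n : ℕ} (g : Fin n → M) (s : ℕ) : ∀ x, 0 ≤ predAt P γe γc π0 g s x :=
  predSeq_nonneg hP γe γc hπ0 _

end BayesUpdate

theorem Fin.snoc_mk_of_lt {α : Type*} {n k : ℕ} (p : Fin n → α) (x : α) (hk : k < n)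
    (hk' : k < n + 1) : Fin.snoc (α := fun _ => α) p x ⟨k, hk'⟩ = p ⟨k, hk⟩ :=
  Fin.snoc_castSucc (α := fun _ => α) x p ⟨k, hk⟩

theorem Fin.sum_univ_pi_snoc {α β : Type*} [Fintype α] [AddCommMonoid β] {n : ℕ}
    (F : (Fin (n + 1) → α) → β) : ∑ xs, F xs = ∑ x, ∑ ys : Fin n → α, F (Fin.snoc ys x) := by
  rw [← (Fin.snocEquiv fun _ => α).sum_comp, Fintype.sum_prod_type]
  rfl

theorem List.ofFn_snoc {α : Type*} {n : ℕ} (p : Fin n → α) (x : α) :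
    List.ofFn (Fin.snoc p x) = List.ofFn p ++ [x] := by
  simp only [List.ofFn_succ', Fin.snoc_castSucc, Fin.snoc_last, List.concat_eq_append]

section PredictorProcess

variable [Fintype X] [DecidableEq M] (P : X → U → X → ℝ) (γe : (X → ℝ) → (X → M))
  (γc : (X → ℝ) → ((X → M) → M → U))

theorem predSeq_append_singleton (π : X → ℝ) (l : List M) (q : M) :
    predSeq P γe γc π (l ++ [q]) =
      Fupd P (predSeq P γe γc π l) (γe (predSeq P γe γc π l)) (γc (predSeq P γe γc π l)) q := by
  induction l generalizing π with
  | nil => rfl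
  | cons a l ih => exact ih _

variable (π0 : X → ℝ)

theorem predAt_zero {n : ℕ} (g : Fin n → M) : predAt P γe γc π0 g 0 = π0 :=
  rfl

theorem predAt_snoc_of_le {n : ℕ} (g : Fin n → M) (q : M) {s : ℕ} (hs : s ≤ n) :
    predAt P γe γc π0 (Fin.snoc g q) s = predAt P γe γc π0 g s := by
  rw [predAt, predAt, List.ofFn_snoc, List.take_append_of_le_length (by simpa using hs)]

theorem predAt_snoc_succ {n : ℕ} (g : Fin n → M) (q : M) :
    predAt P γe γc π0 (Fin.snoc g q) (n + 1) =
      Fupd P (predAt P γe γc π0 g n) (γe (predAt P γe γc π0 g n))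
        (γc (predAt P γe γc π0 g n)) q := by
  rw [predAt, predAt, List.ofFn_snoc, List.take_of_length_le (by simp),
    List.take_of_length_le (by simp), predSeq_append_singleton]

end PredictorProcess

section TrajectoryLaw

variable [Fintype X] [DecidableEq M] (P : X → U → X → ℝ) (γe : (X → ℝ) → (X → M))
  (γc : (X → ℝ) → ((X → M) → M → U)) (π0 : X → ℝ)

/-- Law of the state `x_n` given the earlier states `ys` and outputs `g`. -/
def nextProb : (n : ℕ) → (Fin n → M) → (Fin n → X) → X → ℝ
  | 0, _, _, x => π0 x
  | n + 1, g, ys, x =>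
      P (ys (Fin.last n))
        (γc (predAt P γe γc π0 g n) (γe (predAt P γe γc π0 g n)) (g (Fin.last n))) x

variable [Fintype M]

theorem law_snoc {n : ℕ} (ys : Fin n → X) (x : X) (g : Fin n → M) (q : M) :
    law P γe γc π0 (n + 1) (Fin.snoc ys x) (Fin.snoc g q) =
      law P γe γc π0 n ys g * nextProb P γe γc π0 n g ys x *
        (if q = γe (predAt P γe γc π0 g n) x then 1 else 0) := by
  rw [law, Fin.prod_univ_castSucc, mul_assoc]
  congr 1
  · refine Finset.prod_congr rfl fun s _ => ?_
    have hs : (s : ℕ) - 1 < n := (Nat.sub_le _ _).trans_lt s.isLt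
    simp only [Fin.val_castSucc, Fin.snoc_castSucc, Fin.snoc_mk_of_lt _ _ hs,
      predAt_snoc_of_le P γe γc π0 g q s.isLt.le, predAt_snoc_of_le P γe γc π0 g q hs.le]
  · simp only [Fin.snoc_last, Fin.val_last, predAt_snoc_of_le P γe γc π0 g q le_rfl]
    congr 1
    cases n with
    | zero => rfl
    | succ m =>
      simp only [Nat.add_one_ne_zero, if_false, Nat.add_sub_cancel,
        Fin.snoc_mk_of_lt _ _ m.lt_succ_self, predAt_snoc_of_le P γe γc π0 g q m.le_succ]
      rfl

/-- The joint weight `P(q_{[0,n-1]} = g, x_n = x)`. -/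
def jointProb (n : ℕ) (g : Fin n → M) (x : X) : ℝ :=
  ∑ ys : Fin n → X, law P γe γc π0 n ys g * nextProb P γe γc π0 n g ys x

theorem sum_law_snoc_mul {n : ℕ} (g : Fin n → M) (q : M) (f : X → ℝ) :
    ∑ xs : Fin (n + 1) → X, law P γe γc π0 (n + 1) xs (Fin.snoc g q) * f (xs (Fin.last n)) =
      ∑ x ∈ Finset.univ.filter (fun x => γe (predAt P γe γc π0 g n) x = q),
        jointProb P γe γc π0 n g x * f x := by
  rw [Fin.sum_univ_pi_snoc, Finset.sum_filter]
  refine Finset.sum_congr rfl fun x _ => ?_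
  simp only [Fin.snoc_last, law_snoc, jointProb, Finset.sum_mul]
  by_cases hx : γe (predAt P γe γc π0 g n) x = q
  · simp [hx]
  · simp [hx, Ne.symm hx]

theorem outProb_snoc_eq_sum_jointProb {n : ℕ} (g : Fin n → M) (q : M) :
    outProb P γe γc π0 (n + 1) (Fin.snoc g q) =
      ∑ x ∈ Finset.univ.filter (fun x => γe (predAt P γe γc π0 g n) x = q),
        jointProb P γe γc π0 n g x := by
  simpa [outProb] using sum_law_snoc_mul P γe γc π0 g q 1

theorem jointProb_snoc {n : ℕ} (g : Fin n → M) (q : M) (x' : X) :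
    jointProb P γe γc π0 (n + 1) (Fin.snoc g q) x' =
      ∑ x ∈ Finset.univ.filter (fun x => γe (predAt P γe γc π0 g n) x = q),
        jointProb P γe γc π0 n g x *
          P x (γc (predAt P γe γc π0 g n) (γe (predAt P γe γc π0 g n)) q) x' := by
  rw [jointProb, ← sum_law_snoc_mul]
  simp only [nextProb, predAt_snoc_of_le P γe γc π0 g q le_rfl, Fin.snoc_last]

end TrajectoryLaw

section MarkovProperty

variable [Fintype X] [Fintype M] [DecidableEq M] {P : X → U → X → ℝ}
  (hP : ∀ x u x', 0 ≤ P x u x') (γe : (X → ℝ) → (X → M))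
  (γc : (X → ℝ) → ((X → M) → M → U)) {π0 : X → ℝ} (hπ0 : ∀ x, 0 ≤ π0 x)
include hP hπ0

theorem jointProb_eq_outProb_mul_predAt (n : ℕ) (g : Fin n → M) (x : X) :
    jointProb P γe γc π0 n g x = outProb P γe γc π0 n g * predAt P γe γc π0 g n x := by
  induction n generalizing x with
  | zero => simp [jointProb, outProb, law, nextProb, predAt_zero]
  | succ n ih =>
    induction g using Fin.snocCases with
    | snoc g q => ?_
    set π := predAt P γe γc π0 g n
    calc jointProb P γe γc π0 (n + 1) (Fin.snoc g q) x
        = outProb P γe γc π0 n g *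
            ∑ y ∈ Finset.univ.filter (fun y => γe π y = q), P y (γc π (γe π) q) x * π y := by
          rw [jointProb_snoc, Finset.mul_sum]
          exact Finset.sum_congr rfl fun y _ => by rw [ih]; ring
      _ = outProb P γe γc π0 n g * mass π (γe π) q * Fupd P π (γe π) (γc π) q x := by
          rw [mul_assoc, mass_mul_Fupd P (predAt_nonneg hP γe γc hπ0 g n)]
      _ = outProb P γe γc π0 (n + 1) (Fin.snoc g q) *
            predAt P γe γc π0 (Fin.snoc g q) (n + 1) x := by
          rw [outProb_snoc_eq_sum_jointProb, predAt_snoc_succ, mass, Finset.mul_sum]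
          simp only [ih]
          rfl

theorem outProb_snoc {n : ℕ} (g : Fin n → M) (q : M) :
    outProb P γe γc π0 (n + 1) (Fin.snoc g q) =
      outProb P γe γc π0 n g * mass (predAt P γe γc π0 g n) (γe (predAt P γe γc π0 g n)) q := by
  rw [outProb_snoc_eq_sum_jointProb, mass, Finset.mul_sum]
  simp only [jointProb_eq_outProb_mul_predAt hP γe γc hπ0]

theorem condProb_predAt_succ_eq {t : ℕ} (g : Fin t → M) (hpos : 0 < outProb P γe γc π0 t g)
    (ρ : X → ℝ) :
    (∑ q ∈ Finset.univ.filter (fun q : M => predAt P γe γc π0 (Fin.snoc g q) (t + 1) = ρ),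
        outProb P γe γc π0 (t + 1) (Fin.snoc g q)) / outProb P γe γc π0 t g
      = ∑ q ∈ Finset.univ.filter
            (fun q : M =>
              0 < mass (predAt P γe γc π0 g t) (γe (predAt P γe γc π0 g t)) q ∧
              Fupd P (predAt P γe γc π0 g t) (γe (predAt P γe γc π0 g t))
                  (γc (predAt P γe γc π0 g t)) q = ρ),
          mass (predAt P γe γc π0 g t) (γe (predAt P γe γc π0 g t)) q := by
  simp only [predAt_snoc_succ, outProb_snoc hP γe γc hπ0, ← Finset.mul_sum]
  rw [mul_div_cancel_left₀ _ hpos.ne', Finset.sum_filter, Finset.sum_filter]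
  refine Finset.sum_congr rfl fun q _ => ?_
  rcases (mass_nonneg (predAt_nonneg hP γe γc hπ0 g t) (γe (predAt P γe γc π0 g t)) q).eq_or_lt
    with hq | hq
  · rw [← hq, ite_self, ite_self]
  · simp only [hq, true_and]

end MarkovProperty

theorem predictor_markov_property_general
    [Fintype X] [Fintype M]
    [DecidableEq M]
    (P : X → U → X → ℝ) (hP : ∀ x u, IsPmf (P x u))
    (γe : (X → ℝ) → (X → M)) (γc : (X → ℝ) → ((X → M) → M → U))
    (π0 : X → ℝ) (hπ0 : IsPmf π0)
    (t : ℕ) (h h' : Fin t → M)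
    (hpos : 0 < outProb P γe γc π0 t h) (hpos' : 0 < outProb P γe γc π0 t h')
    (heq : predAt P γe γc π0 h t = predAt P γe γc π0 h' t)
    (ρ : X → ℝ) :
    ((∑ q ∈ Finset.univ.filter
          (fun q : M => predAt P γe γc π0 (Fin.snoc h q) (t + 1) = ρ),
        outProb P γe γc π0 (t + 1) (Fin.snoc h q))
        / outProb P γe γc π0 t h
      = ∑ q ∈ Finset.univ.filter
            (fun q : M =>
              0 < mass (predAt P γe γc π0 h t) (γe (predAt P γe γc π0 h t)) q ∧
              Fupd P (predAt P γe γc π0 h t) (γe (predAt P γe γc π0 h t))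
                  (γc (predAt P γe γc π0 h t)) q = ρ),
          mass (predAt P γe γc π0 h t) (γe (predAt P γe γc π0 h t)) q)
    ∧
    ((∑ q ∈ Finset.univ.filter
          (fun q : M => predAt P γe γc π0 (Fin.snoc h' q) (t + 1) = ρ),
        outProb P γe γc π0 (t + 1) (Fin.snoc h' q))
        / outProb P γe γc π0 t h'
      = ∑ q ∈ Finset.univ.filter
            (fun q : M =>
              0 < mass (predAt P γe γc π0 h t) (γe (predAt P γe γc π0 h t)) q ∧
              Fupd P (predAt P γe γc π0 h t) (γe (predAt P γe γc π0 h t))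
                  (γc (predAt P γe γc π0 h t)) q = ρ),
          mass (predAt P γe γc π0 h t) (γe (predAt P γe γc π0 h t)) q) := by
  have hP' : ∀ x u x', 0 ≤ P x u x' := fun x u => (hP x u).1
  refine ⟨condProb_predAt_succ_eq hP' γe γc hπ0.1 h hpos ρ, ?_⟩
  rw [heq]
  exact condProb_predAt_succ_eq hP' γe γc hπ0.1 h' hpos' ρ

/-- Markov property of the predictor process: fix a controlled-predictor
policy and initial pmf `π_0`, and let `t ≥ 0`. For any two output histories
`h, h' ∈ ℳ^t` of positive probability under the trajectory law which yield the same
predictor `π_t` (hence the same `Q_t = γ^e(π_t)`, `η_t = γ^c(π_t)`), the conditional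
distribution of `π_{t+1}` given the history is the same; explicitly, for every
`ρ ∈ P(𝕏)`,
`P(π_{t+1} = ρ | q_{[0,t-1]} = h) = Σ_{q : π_t(Q_t⁻¹(q)) > 0, F(π_t,Q_t,η_t,q) = ρ} π_t(Q_t⁻¹(q))`,
which depends only on `(π_t, Q_t, η_t)`. -/
theorem predictor_markov_property
    [Fintype X] [Fintype U] [Fintype M]
    [Nonempty X] [Nonempty U] [Nonempty M] [DecidableEq X] [DecidableEq M]
    (P : X → U → X → ℝ) (hP : ∀ x u, IsPmf (P x u))
    (γe : (X → ℝ) → (X → M)) (γc : (X → ℝ) → ((X → M) → M → U))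
    (π0 : X → ℝ) (hπ0 : IsPmf π0)
    (t : ℕ) (h h' : Fin t → M)
    (hpos : 0 < outProb P γe γc π0 t h) (hpos' : 0 < outProb P γe γc π0 t h')
    (heq : predAt P γe γc π0 h t = predAt P γe γc π0 h' t)
    (ρ : X → ℝ) (hρ : IsPmf ρ) :
    ((∑ q ∈ Finset.univ.filter
          (fun q : M => predAt P γe γc π0 (Fin.snoc h q) (t + 1) = ρ),
        outProb P γe γc π0 (t + 1) (Fin.snoc h q))
        / outProb P γe γc π0 t h
      = ∑ q ∈ Finset.univ.filter
            (fun q : M =>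
              0 < mass (predAt P γe γc π0 h t) (γe (predAt P γe γc π0 h t)) q ∧
              Fupd P (predAt P γe γc π0 h t) (γe (predAt P γe γc π0 h t))
                  (γc (predAt P γe γc π0 h t)) q = ρ),
          mass (predAt P γe γc π0 h t) (γe (predAt P γe γc π0 h t)) q)
    ∧
    ((∑ q ∈ Finset.univ.filter
          (fun q : M => predAt P γe γc π0 (Fin.snoc h' q) (t + 1) = ρ),
        outProb P γe γc π0 (t + 1) (Fin.snoc h' q))
        / outProb P γe γc π0 t h'
      = ∑ q ∈ Finset.univ.filter
            (fun q : M =>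
              0 < mass (predAt P γe γc π0 h t) (γe (predAt P γe γc π0 h t)) q ∧
              Fupd P (predAt P γe γc π0 h t) (γe (predAt P γe γc π0 h t))
                  (γc (predAt P γe γc π0 h t)) q = ρ),
          mass (predAt P γe γc π0 h t) (γe (predAt P γe γc π0 h t)) q) :=
  predictor_markov_property_general P hP γe γc π0 hπ0 t h h' hpos hpos' heq ρ

end
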